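/- arXiv:2506.16484 — 2 statements merged into one kernel-verified Lean document; each statement's English description precedes it below -/
import Mathlib

section
/- For every θ̄ ∈ ℝ, every t > 0, and all points x₁ ≠ x₂ ∈ ℝ² and x₁' ≠ x₂' ∈ ℝ², the quantity W^{θ̄}(t,(x₁,x₂),(x₁',x₂')) is finite, i.e. the fourfold iterated integral defining it converges. -/
open MeasureTheory Set ENNReal

noncomputable section

abbrev Plane := EuclideanSpace ℝ (Fin 2)

/-- The 2d heat kernel `p(t,x) = (2πt)⁻¹ exp(−|x|²/(2t))`. -/
def heatK (t : ℝ) (x : Plane) : ℝ :=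
  (2 * Real.pi * t)⁻¹ * Real.exp (-‖x‖ ^ 2 / (2 * t))

/-- `j^{θ̄}(t) = e^{θ̄ t} ∫₀^∞ u^{t−1}/Γ(u) du`. -/
def jfn (θ : ℝ) (t : ℝ) : ℝ :=
  Real.exp (θ * t) * ∫ u in Ioi (0 : ℝ), u ^ (t - 1) / Real.Gamma u

/-- The kernel `W^{θ̄}(t,(x₁,x₂),(x₁',x₂'))`, defined as a fourfold iterated integral with
values in `[0,∞]`. Here `u'' = t − u − u'`. -/
def Wker (θ t : ℝ) (x₁ x₂ x₁' x₂' : Plane) : ℝ≥0∞ :=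
  ∫⁻ u in Ioo (0 : ℝ) t, ∫⁻ u' in Ioo (0 : ℝ) (t - u), ∫⁻ y : Plane, ∫⁻ y' : Plane,
    ENNReal.ofReal (heatK u (x₁ - y) * heatK u (x₂ - y) *
      (4 * Real.pi * jfn θ u' * heatK (u' / 2) (y - y')) *
      (heatK (t - u - u') (y' - x₁') * heatK (t - u - u') (y' - x₂')))

/-- The pairing `N_{g,g'}(θ̄) = ∫ g(x₁)g(x₂) W^{θ̄}(1,(x₁,x₂),(x₁',x₂')) g'(x₁')g'(x₂') dx`. -/
def Npair (g g' : Plane → ℝ) (θ : ℝ) : ℝ≥0∞ :=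
  ∫⁻ x₁ : Plane, ∫⁻ x₂ : Plane, ∫⁻ x₁' : Plane, ∫⁻ x₂' : Plane,
    ENNReal.ofReal (g x₁ * g x₂) * Wker θ 1 x₁ x₂ x₁' x₂' *
      ENNReal.ofReal (g' x₁' * g' x₂')

/-! Pairing the two kernels that share a time, via the Gaussian identity
`p(u,a) p(u,b) = p(2u, a - b) p(u/2, (a + b)/2)`, splits off a relative factor
`p(2u, x₁ - x₂) ≤ (π |x₁ - x₂|²)⁻¹`, bounded uniformly in `u` because `x₁ ≠ x₂` (likewise for
`x₁', x₂'`). What is left of the spatial integral is a chain of three heat kernels whose times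
add up to `t/2`; bounding the longest-lived one by its supremum gives at most `3/(πt)`. Finally
`j^{θ̄}` is bounded on `(0, t]` because `Γ(u + 1) ≥ e^{-3} 2^u`, so the integrand in `(u, u')` is
bounded on the triangle `u + u' < t`. -/

lemma heatK_nonneg {s : ℝ} (hs : 0 ≤ s) (x : Plane) : 0 ≤ heatK s x := by
  unfold heatK; positivity

lemma heatK_neg (s : ℝ) (x : Plane) : heatK s (-x) = heatK s x := by
  simp only [heatK, norm_neg]

lemma continuous_heatK (s : ℝ) : Continuous (heatK s) := by
  unfold heatK; fun_prop

lemma heatK_le_inv {s : ℝ} (hs : 0 < s) (x : Plane) : heatK s x ≤ (2 * Real.pi * s)⁻¹ := by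
  unfold heatK
  have : Real.exp (-‖x‖ ^ 2 / (2 * s)) ≤ 1 := Real.exp_le_one_iff.2 (by
    rw [neg_div]; exact neg_nonpos.2 (by positivity))
  have := Real.pi_pos
  nlinarith [inv_pos.2 (by positivity : 0 < 2 * Real.pi * s)]

lemma heatK_le_inv_norm_sq {s : ℝ} (hs : 0 < s) {x : Plane} (hx : x ≠ 0) :
    heatK s x ≤ (Real.pi * ‖x‖ ^ 2)⁻¹ := by
  have hr : 0 < ‖x‖ ^ 2 / (2 * s) := by positivity
  have hexp : Real.exp (-‖x‖ ^ 2 / (2 * s)) ≤ (‖x‖ ^ 2 / (2 * s))⁻¹ := by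
    rw [neg_div, Real.exp_neg]
    exact inv_anti₀ hr (by linarith [Real.add_one_le_exp (‖x‖ ^ 2 / (2 * s))])
  calc heatK s x ≤ (2 * Real.pi * s)⁻¹ * (‖x‖ ^ 2 / (2 * s))⁻¹ :=
        mul_le_mul_of_nonneg_left hexp (by positivity)
    _ = (Real.pi * ‖x‖ ^ 2)⁻¹ := by field_simp

lemma integral_heatK {s : ℝ} (hs : 0 < s) : ∫ x : Plane, heatK s x = 1 := by
  have h : ∀ x : Plane, heatK s x = (2 * Real.pi * s)⁻¹ * Real.exp (-(2 * s)⁻¹ * ‖x‖ ^ 2) := by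
    intro x; simp only [heatK, div_eq_inv_mul, mul_neg, neg_mul]
  simp_rw [h]
  rw [integral_const_mul, GaussianFourier.integral_rexp_neg_mul_sq_norm (by positivity),
    finrank_euclideanSpace_fin]
  have := Real.pi_pos
  field_simp
  norm_num

lemma lintegral_heatK_sub_right {s : ℝ} (hs : 0 < s) (c : Plane) :
    ∫⁻ y : Plane, ENNReal.ofReal (heatK s (y - c)) = 1 := by
  rw [lintegral_sub_right_eq_self (fun y => ENNReal.ofReal (heatK s y)) c,
    ← ofReal_integral_eq_lintegral_ofReal, integral_heatK hs, ENNReal.ofReal_one]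
  · exact Integrable.of_integral_ne_zero (by rw [integral_heatK hs]; exact one_ne_zero)
  · exact Filter.Eventually.of_forall (heatK_nonneg hs.le)

lemma lintegral_heatK_sub_left {s : ℝ} (hs : 0 < s) (c : Plane) :
    ∫⁻ y : Plane, ENNReal.ofReal (heatK s (c - y)) = 1 := by
  simp_rw [← neg_sub _ c, heatK_neg]
  exact lintegral_heatK_sub_right hs c

lemma norm_sub_sq_add_norm_sub_sq (a b y : Plane) :
    ‖a - y‖ ^ 2 + ‖b - y‖ ^ 2 = ‖a - b‖ ^ 2 / 2 + 2 * ‖midpoint ℝ a b - y‖ ^ 2 := by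
  have hsum : (a - y) + (b - y) = (2 : ℝ) • (midpoint ℝ a b - y) := by
    rw [midpoint_eq_smul_add, invOf_eq_inv]
    module
  have := parallelogram_law_with_norm ℝ (a - y) (b - y)
  rw [hsum, sub_sub_sub_cancel_right, norm_smul, mul_pow] at this
  norm_num at this
  linarith

lemma heatK_sub_mul_heatK_sub (s : ℝ) (a b y : Plane) :
    heatK s (a - y) * heatK s (b - y) =
      heatK (2 * s) (a - b) * heatK (s / 2) (midpoint ℝ a b - y) := by
  rcases eq_or_ne s 0 with rfl | hs
  · simp [heatK]
  simp only [heatK]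
  have hexp : Real.exp (-‖a - y‖ ^ 2 / (2 * s)) * Real.exp (-‖b - y‖ ^ 2 / (2 * s)) =
      Real.exp (-‖a - b‖ ^ 2 / (2 * (2 * s))) *
        Real.exp (-‖midpoint ℝ a b - y‖ ^ 2 / (2 * (s / 2))) := by
    rw [← Real.exp_add, ← Real.exp_add]
    congr 1
    field_simp
    linarith [norm_sub_sq_add_norm_sub_sq a b y]
  calc _ = (2 * Real.pi * s)⁻¹ * (2 * Real.pi * s)⁻¹ *
        (Real.exp (-‖a - y‖ ^ 2 / (2 * s)) * Real.exp (-‖b - y‖ ^ 2 / (2 * s))) := by ring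
    _ = _ := by
      rw [hexp]
      field_simp

lemma heatK_le_three_div {s S : ℝ} (hS : 0 < S) (hs : 0 < s) (hSs : S ≤ 3 * s) (x : Plane) :
    heatK s x ≤ 3 / (2 * Real.pi * S) := by
  refine (heatK_le_inv hs x).trans ?_
  rw [← one_div, div_le_div_iff₀ (by positivity) (by positivity)]
  nlinarith [Real.pi_pos]

lemma lintegral_heatK_chain_le {s₁ s₂ s₃ : ℝ} (h₁ : 0 < s₁) (h₂ : 0 < s₂) (h₃ : 0 < s₃)
    (a c : Plane) :
    ∫⁻ y : Plane, ∫⁻ y' : Plane,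
      ENNReal.ofReal (heatK s₁ (a - y) * heatK s₂ (y - y') * heatK s₃ (y' - c)) ≤
      ENNReal.ofReal (3 / (2 * Real.pi * (s₁ + s₂ + s₃))) := by
  set B := ENNReal.ofReal (3 / (2 * Real.pi * (s₁ + s₂ + s₃)))
  have hBtop : B ≠ ⊤ := ENNReal.ofReal_ne_top
  have hB : ∀ {s}, 0 < s → s₁ + s₂ + s₃ ≤ 3 * s → ∀ x, ENNReal.ofReal (heatK s x) ≤ B :=
    fun hs hsum x => ENNReal.ofReal_le_ofReal (heatK_le_three_div (by positivity) hs hsum x)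
  simp only [ENNReal.ofReal_mul (mul_nonneg (heatK_nonneg h₁.le _) (heatK_nonneg h₂.le _)),
    ENNReal.ofReal_mul (heatK_nonneg h₁.le _)]
  have hmax : s₁ + s₂ + s₃ ≤ 3 * s₁ ∨ s₁ + s₂ + s₃ ≤ 3 * s₂ ∨ s₁ + s₂ + s₃ ≤ 3 * s₃ := by
    by_contra! h
    linarith [h.1, h.2.1, h.2.2]
  rcases hmax with hmax | hmax | hmax
  · calc _ ≤ ∫⁻ y : Plane, ∫⁻ y' : Plane, B * ENNReal.ofReal (heatK s₂ (y - y')) *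
            ENNReal.ofReal (heatK s₃ (y' - c)) := by
          gcongr with y y'
          exact hB h₁ hmax _
      _ = B * ∫⁻ y' : Plane, ∫⁻ y : Plane, ENNReal.ofReal (heatK s₂ (y - y')) *
            ENNReal.ofReal (heatK s₃ (y' - c)) := by
          simp_rw [mul_assoc, lintegral_const_mul' B _ hBtop]
          rw [lintegral_lintegral_swap]
          exact (((continuous_heatK s₂).comp (continuous_fst.sub continuous_snd)).measurable
            |>.ennreal_ofReal.mul ((continuous_heatK s₃).comp
              (continuous_snd.sub continuous_const)).measurable.ennreal_ofReal).aemeasurable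
      _ = B := by
          simp_rw [lintegral_mul_const' _ _ ENNReal.ofReal_ne_top, lintegral_heatK_sub_right h₂,
            one_mul, lintegral_heatK_sub_right h₃, mul_one]
  · calc _ ≤ ∫⁻ y : Plane, ∫⁻ y' : Plane, ENNReal.ofReal (heatK s₁ (a - y)) * B *
            ENNReal.ofReal (heatK s₃ (y' - c)) := by
          gcongr with y y'
          exact hB h₂ hmax _
      _ = B := by
          simp_rw [lintegral_const_mul' _ _ (ENNReal.mul_ne_top ENNReal.ofReal_ne_top hBtop),
            lintegral_heatK_sub_right h₃, mul_one,
            lintegral_mul_const' _ _ hBtop, lintegral_heatK_sub_left h₁, one_mul]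
  · calc _ ≤ ∫⁻ y : Plane, ∫⁻ y' : Plane, ENNReal.ofReal (heatK s₁ (a - y)) *
            ENNReal.ofReal (heatK s₂ (y - y')) * B := by
          gcongr with y y'
          exact hB h₃ hmax _
      _ = B := by
          simp_rw [mul_right_comm _ _ B, lintegral_const_mul' _ _ (ENNReal.mul_ne_top
            ENNReal.ofReal_ne_top hBtop), lintegral_heatK_sub_left h₂, mul_one,
            lintegral_mul_const' _ _ hBtop, lintegral_heatK_sub_left h₁, one_mul]

lemma jfn_nonneg (θ s : ℝ) : 0 ≤ jfn θ s :=
  mul_nonneg (Real.exp_nonneg _) (setIntegral_nonneg measurableSet_Ioi fun u (hu : 0 < u) => by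
    have := Real.Gamma_pos_of_pos hu; positivity)

lemma exp_neg_three_mul_two_rpow_le_Gamma {s : ℝ} (hs : 1 ≤ s) :
    Real.exp (-3) * 2 ^ (s - 1) ≤ Real.Gamma s := by
  have hs0 : 0 < s := by linarith
  have hsub : Ioc (2 : ℝ) 3 ⊆ Ioi 0 := Ioc_subset_Ioi_self.trans (Ioi_subset_Ioi zero_le_two)
  rw [Real.Gamma_eq_integral hs0]
  calc Real.exp (-3) * 2 ^ (s - 1) = ∫ _ in Ioc (2 : ℝ) 3, Real.exp (-3) * 2 ^ (s - 1) := by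
        simp; norm_num
    _ ≤ ∫ x in Ioc (2 : ℝ) 3, Real.exp (-x) * x ^ (s - 1) := by
        refine setIntegral_mono_on (integrableOn_const (by simp [Real.volume_Ioc]))
          ((Real.GammaIntegral_convergent hs0).mono_set hsub) measurableSet_Ioc fun x hx => ?_
        gcongr
        · linarith [hx.2]
        · linarith [hx.1]
    _ ≤ ∫ x in Ioi (0 : ℝ), Real.exp (-x) * x ^ (s - 1) :=
        setIntegral_mono_set (Real.GammaIntegral_convergent hs0)
          ((ae_restrict_mem measurableSet_Ioi).mono fun x (hx : 0 < x) => by positivity)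
          hsub.eventuallyLE

lemma rpow_sub_one_div_Gamma_le {s t u : ℝ} (hs : 0 ≤ s) (hst : s ≤ t) (hu : 0 < u) :
    u ^ (s - 1) / Real.Gamma u ≤
      Real.exp 3 * ((1 + u ^ t) * Real.exp (-(Real.log 2 * u))) := by
  have hΓ : Real.exp (-3) * 2 ^ u ≤ Real.Gamma (u + 1) := by
    simpa using exp_neg_three_mul_two_rpow_le_Gamma (s := u + 1) (by linarith)
  have hpow : u ^ s ≤ 1 + u ^ t := by
    rcases le_total u 1 with hu1 | hu1
    · linarith [Real.rpow_le_one hu.le hu1 hs, Real.rpow_nonneg hu.le t]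
    · linarith [Real.rpow_le_rpow_of_exponent_le hu1 hst]
  calc u ^ (s - 1) / Real.Gamma u = u ^ s / Real.Gamma (u + 1) := by
        rw [Real.Gamma_add_one hu.ne', Real.rpow_sub_one hu.ne']
        field_simp
    _ ≤ (1 + u ^ t) / (Real.exp (-3) * 2 ^ u) := by gcongr
    _ = _ := by
        rw [Real.rpow_def_of_pos two_pos, Real.exp_neg, Real.exp_neg]
        field_simp

lemma bddAbove_jfn_image_Ioc (θ t : ℝ) : BddAbove (jfn θ '' Ioc 0 t) := by
  set g := fun u : ℝ => Real.exp 3 * ((1 + u ^ t) * Real.exp (-(Real.log 2 * u)))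
  refine ⟨Real.exp (|θ| * t) * ∫ u in Ioi 0, g u, ?_⟩
  rintro _ ⟨s, ⟨hs, hst⟩, rfl⟩
  have hg : IntegrableOn g (Ioi 0) := by
    have hlog : 0 < Real.log 2 := Real.log_pos one_lt_two
    have h0 := integrableOn_rpow_mul_exp_neg_mul_rpow (s := 0) neg_one_lt_zero one_pos hlog
    have ht := integrableOn_rpow_mul_exp_neg_mul_rpow (s := t) (by linarith) one_pos hlog
    refine IntegrableOn.congr_fun ((h0.add ht).const_mul (Real.exp 3)) (fun u _ => ?_)
      measurableSet_Ioi
    simp only [g, Pi.add_apply, Real.rpow_zero, Real.rpow_one, neg_mul]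
    ring
  have hI : ∫ u in Ioi 0, u ^ (s - 1) / Real.Gamma u ≤ ∫ u in Ioi 0, g u :=
    integral_mono_of_nonneg
      ((ae_restrict_mem measurableSet_Ioi).mono fun u (hu : 0 < u) => by
        have := Real.Gamma_pos_of_pos hu; positivity)
      hg
      ((ae_restrict_mem measurableSet_Ioi).mono fun u (hu : 0 < u) =>
        rpow_sub_one_div_Gamma_le hs.le hst hu)
  refine mul_le_mul (Real.exp_le_exp.2 ?_) hI ?_ (Real.exp_nonneg _)
  · nlinarith [le_abs_self θ, abs_nonneg θ]
  · exact setIntegral_nonneg measurableSet_Ioi fun u (hu : 0 < u) => by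
      have := Real.Gamma_pos_of_pos hu; positivity

lemma setLIntegral_Ioo_setLIntegral_Ioo_lt_top_of_le {t : ℝ} {C : ℝ≥0∞} (hC : C ≠ ⊤)
    {F : ℝ → ℝ → ℝ≥0∞} (hF : ∀ u ∈ Ioo 0 t, ∀ u' ∈ Ioo 0 (t - u), F u u' ≤ C) :
    ∫⁻ u in Ioo 0 t, ∫⁻ u' in Ioo 0 (t - u), F u u' < ⊤ := by
  refine setLIntegral_lt_top_of_le_nnreal (by simp)
    ⟨(C * ENNReal.ofReal t).toNNReal, fun u hu => ?_⟩
  rw [ENNReal.coe_toNNReal (ENNReal.mul_ne_top hC ENNReal.ofReal_ne_top)]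
  calc _ ≤ ∫⁻ _ in Ioo 0 (t - u), C := setLIntegral_mono' measurableSet_Ioo (hF u hu)
    _ = C * ENNReal.ofReal (t - u) := by rw [setLIntegral_const, Real.volume_Ioo, sub_zero]
    _ ≤ C * ENNReal.ofReal t := by gcongr; linarith [hu.1]

lemma lintegral_lintegral_Wker_integrand_le {θ t u u' M : ℝ} {x₁ x₂ x₁' x₂' : Plane}
    (hx : x₁ ≠ x₂) (hx' : x₁' ≠ x₂') (hu : 0 < u) (hu' : 0 < u') (hu'' : 0 < t - u - u')
    (hM : jfn θ u' ≤ M) :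
    ∫⁻ y : Plane, ∫⁻ y' : Plane,
      ENNReal.ofReal (heatK u (x₁ - y) * heatK u (x₂ - y) *
        (4 * Real.pi * jfn θ u' * heatK (u' / 2) (y - y')) *
        (heatK (t - u - u') (y' - x₁') * heatK (t - u - u') (y' - x₂'))) ≤
      ENNReal.ofReal ((Real.pi * ‖x₁ - x₂‖ ^ 2)⁻¹ * (4 * Real.pi * M) *
        (Real.pi * ‖x₁' - x₂'‖ ^ 2)⁻¹ * (3 / (Real.pi * t))) := by
  set u'' := t - u - u'
  set A := heatK (2 * u) (x₁ - x₂) * (4 * Real.pi * jfn θ u') * heatK (2 * u'') (x₁' - x₂')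
  have hA0 : 0 ≤ A := by
    have := jfn_nonneg θ u'
    have := heatK_nonneg (by positivity : 0 ≤ 2 * u) (x₁ - x₂)
    have := heatK_nonneg (by positivity : 0 ≤ 2 * u'') (x₁' - x₂')
    positivity
  have hfactor : ∀ y y' : Plane,
      heatK u (x₁ - y) * heatK u (x₂ - y) * (4 * Real.pi * jfn θ u' * heatK (u' / 2) (y - y')) *
        (heatK u'' (y' - x₁') * heatK u'' (y' - x₂')) =
      A * (heatK (u / 2) (midpoint ℝ x₁ x₂ - y) * heatK (u' / 2) (y - y') *
        heatK (u'' / 2) (y' - midpoint ℝ x₁' x₂')) := by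
    intro y y'
    have hpair : heatK u'' (y' - x₁') * heatK u'' (y' - x₂') =
        heatK (2 * u'') (x₁' - x₂') * heatK (u'' / 2) (y' - midpoint ℝ x₁' x₂') := by
      rw [← heatK_neg _ (y' - x₁'), ← heatK_neg _ (y' - x₂'),
        ← heatK_neg _ (y' - midpoint ℝ _ _), neg_sub, neg_sub, neg_sub, heatK_sub_mul_heatK_sub]
    rw [heatK_sub_mul_heatK_sub, hpair]
    ring
  have hA : A ≤ (Real.pi * ‖x₁ - x₂‖ ^ 2)⁻¹ * (4 * Real.pi * M) *
      (Real.pi * ‖x₁' - x₂'‖ ^ 2)⁻¹ := by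
    have := jfn_nonneg θ u'
    have := (jfn_nonneg θ u').trans hM
    have := heatK_nonneg (by positivity : 0 ≤ 2 * u'') (x₁' - x₂')
    have := heatK_le_inv_norm_sq (by positivity : 0 < 2 * u) (sub_ne_zero.2 hx)
    have := heatK_le_inv_norm_sq (by positivity : 0 < 2 * u'') (sub_ne_zero.2 hx')
    have := Real.pi_pos
    simp only [A]
    gcongr
  have htimes : u / 2 + u' / 2 + u'' / 2 = t / 2 := by ring
  simp_rw [hfactor, ENNReal.ofReal_mul hA0, lintegral_const_mul' _ _ ENNReal.ofReal_ne_top]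
  calc _ ≤ ENNReal.ofReal A *
        ENNReal.ofReal (3 / (2 * Real.pi * (u / 2 + u' / 2 + u'' / 2))) := by
        gcongr
        exact lintegral_heatK_chain_le (by positivity) (by positivity) (by positivity) _ _
    _ ≤ _ := by
        have ht : 0 < t := by linarith
        rw [← ENNReal.ofReal_mul hA0, htimes, show 2 * Real.pi * (t / 2) = Real.pi * t by ring]
        gcongr

theorem Wker_finite_general (θ t : ℝ) (x₁ x₂ x₁' x₂' : Plane)
    (hx : x₁ ≠ x₂) (hx' : x₁' ≠ x₂') :
    Wker θ t x₁ x₂ x₁' x₂' < ⊤ := by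
  obtain ⟨M, hM⟩ := bddAbove_jfn_image_Ioc θ t
  unfold Wker
  refine setLIntegral_Ioo_setLIntegral_Ioo_lt_top_of_le ENNReal.ofReal_ne_top
    fun u hu u' hu' => lintegral_lintegral_Wker_integrand_le (M := M) hx hx' hu.1 hu'.1 ?_ ?_
  · linarith [hu'.2]
  · exact hM ⟨u', ⟨hu'.1, by linarith [hu.1, hu'.2]⟩, rfl⟩

/-- For every `θ̄ ∈ ℝ`, `t > 0`, and distinct points `x₁ ≠ x₂`, `x₁' ≠ x₂'` in `ℝ²`, the
quantity `W^{θ̄}(t,(x₁,x₂),(x₁',x₂'))` is finite. -/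
theorem Wker_finite (θ t : ℝ) (ht : 0 < t) (x₁ x₂ x₁' x₂' : Plane)
    (hx : x₁ ≠ x₂) (hx' : x₁' ≠ x₂') :
    Wker θ t x₁ x₂ x₁' x₂' < ⊤ :=
  Wker_finite_general θ t x₁ x₂ x₁' x₂' hx hx'

end
end

section
/- (Taylor-step variance bound.) Let m, r ≥ 1 and let h ∈ C_c^∞(ℝ^{m+r}). There exists a constant C > 0, depending only on h, with the following property. Let (Ω, 𝓐, P) be a probability space, let 𝓖 and 𝓗 be sub-σ-algebras of 𝓐, and let U, V : Ω → ℝ^m and R : Ω → ℝ^r be random vectors such that: the pair (U, R) is independent of 𝓖; the pair (U, R) is 𝓗-measurable; V is integrable with E[V | 𝓗] = 0; and E[|V|⁴] < ∞. Then Var( E[ h(U+V, R) | 𝓖 ] ) ≤ 2 · E[ ( E[ ∇₁h(U,R) · V | 𝓖 ] )² ] + C · E[ |V|⁴ ], where ∇₁h denotes the gradient of h in its first m arguments and · is the Euclidean inner product on ℝ^m. -/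
open MeasureTheory ProbabilityTheory

lemma taylor_aux {E : Type*} [NormedAddCommGroup E] [NormedSpace ℝ E]
    {f : E → ℝ} (hf : ContDiff ℝ (⊤ : ℕ∞) f) (hs : HasCompactSupport f) :
    ∃ K : ℝ, 0 ≤ K ∧ ∀ p w : E, |f (p + w) - f p - fderiv ℝ f p w| ≤ K * ‖w‖ ^ 2 := by
  have hg : ContDiff ℝ (⊤ : ℕ∞) (fderiv ℝ f) := hf.fderiv_right (m := (⊤ : ℕ∞)) (by simp)
  have hgs : HasCompactSupport (fderiv ℝ f) := hs.fderiv (𝕜 := ℝ)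
  obtain ⟨K, hK⟩ := Continuous.bounded_above_of_compact_support
    (hg.continuous_fderiv (by simp)) (hgs.fderiv (𝕜 := ℝ))
  set K' : ℝ := max K 0 with hK'
  have hK'0 : 0 ≤ K' := le_max_right _ _
  have hbound : ∀ x, ‖fderiv ℝ (fderiv ℝ f) x‖ ≤ K' := fun x => (hK x).trans (le_max_left _ _)
  have hlip : ∀ z p : E, ‖fderiv ℝ f z - fderiv ℝ f p‖ ≤ K' * ‖z - p‖ := by
    intro z p
    exact Convex.norm_image_sub_le_of_norm_fderiv_le
      (fun x _ => (hg.differentiable (by simp)).differentiableAt)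
      (fun x _ => hbound x) convex_univ (Set.mem_univ p) (Set.mem_univ z)
  refine ⟨K', hK'0, fun p w => ?_⟩
  have key : ‖f (p + w) - f p - (fderiv ℝ f p) ((p + w) - p)‖ ≤ (K' * ‖w‖) * ‖(p + w) - p‖ := by
    refine Convex.norm_image_sub_le_of_norm_fderiv_le'
      (fun x _ => (hf.differentiable (by simp)).differentiableAt)
      (fun x hx => ?_) (convex_closedBall p ‖w‖) (Metric.mem_closedBall_self (norm_nonneg w)) ?_
    · calc ‖fderiv ℝ f x - fderiv ℝ f p‖ ≤ K' * ‖x - p‖ := hlip x p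
        _ ≤ K' * ‖w‖ := by
          have := Metric.mem_closedBall.mp hx
          rw [dist_eq_norm] at this
          exact mul_le_mul_of_nonneg_left this hK'0
    · simp [Metric.mem_closedBall, dist_eq_norm]
  simp only [add_sub_cancel_left] at key
  rw [Real.norm_eq_abs] at key
  calc |f (p + w) - f p - (fderiv ℝ f p) w| ≤ (K' * ‖w‖) * ‖w‖ := key
    _ = K' * ‖w‖ ^ 2 := by ring

set_option maxHeartbeats 1000000 in
lemma condexp_memLp_two {Ω : Type} {m : MeasurableSpace Ω} [m0 : MeasurableSpace Ω]
    {μ : Measure Ω} [IsFiniteMeasure μ] (hm : m ≤ m0) {f : Ω → ℝ} (hf : MemLp f 2 μ) :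
    MemLp (MeasureTheory.condExp m μ f) 2 μ ∧
      ∫ ω, (MeasureTheory.condExp m μ f ω) ^ 2 ∂μ ≤ ∫ ω, (f ω) ^ 2 ∂μ := by
  set F : Lp ℝ 2 μ := hf.toLp f with hF
  set gL : Lp ℝ 2 μ := ↑(condExpL2 ℝ ℝ hm F) with hgL
  have heq : (gL : Ω → ℝ) =ᵐ[μ] MeasureTheory.condExp m μ f := by
    refine ae_eq_condExp_of_forall_setIntegral_eq hm (hf.integrable one_le_two)
      (fun s _ _ => ((Lp.memLp gL).integrable one_le_two).integrableOn)
      (fun s hs hμs => ?_) (aestronglyMeasurable_condExpL2 hm F)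
    have h1 : ∫ x in s, gL x ∂μ = ∫ x in s, F x ∂μ := integral_condExpL2_eq hm F hs hμs.ne
    rw [h1]
    exact setIntegral_congr_ae (hm s hs) ((hf.coeFn_toLp).mono fun x hx _ => hx)
  constructor
  · exact (Lp.memLp gL).ae_eq heq
  · have h1 : ∫ ω, (MeasureTheory.condExp m μ f ω) ^ 2 ∂μ = ∫ ω, (gL ω) ^ 2 ∂μ :=
      integral_congr_ae (heq.symm.fun_comp (· ^ 2))
    have h2 : ∫ ω, (f ω) ^ 2 ∂μ = ∫ ω, (F ω) ^ 2 ∂μ :=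
      integral_congr_ae ((hf.coeFn_toLp).symm.fun_comp (· ^ 2))
    have h3 : ∀ (g : Lp ℝ 2 μ), ∫ ω, (g ω) ^ 2 ∂μ = ‖g‖ ^ 2 := by
      intro g
      rw [← real_inner_self_eq_norm_sq, L2.inner_def]
      simp [RCLike.inner_apply, sq]
    have h5 : ‖gL‖ ≤ ‖F‖ := norm_condExpL2_le hm F
    rw [h1, h2, h3, h3]
    exact pow_le_pow_left₀ (norm_nonneg _) h5 2

lemma var_le_integral_sq {Ω : Type} [m0 : MeasurableSpace Ω] {μ : Measure Ω}
    [IsProbabilityMeasure μ] {X : Ω → ℝ} (hX : MemLp X 2 μ) (c : ℝ) :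
    variance X μ ≤ ∫ ω, (X ω - c) ^ 2 ∂μ := by
  have hX2 : Integrable (fun ω => X ω ^ 2) μ :=
    (memLp_two_iff_integrable_sq hX.aestronglyMeasurable).mp hX
  have hX1 : Integrable X μ := hX.integrable one_le_two
  have hexp : ∫ ω, (X ω - c) ^ 2 ∂μ = ∫ ω, X ω ^ 2 ∂μ - 2 * c * ∫ ω, X ω ∂μ + c ^ 2 := by
    have : (fun ω => (X ω - c) ^ 2) = fun ω => (X ω ^ 2 - 2 * c * X ω) + c ^ 2 := by
      funext ω; ring
    have hsub : Integrable (fun ω => X ω ^ 2 - 2 * c * X ω) μ :=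
      hX2.sub (hX1.const_mul (2 * c))
    have hcm : Integrable (fun ω => 2 * c * X ω) μ := hX1.const_mul (2 * c)
    rw [this, integral_add hsub (integrable_const _),
      integral_sub hX2 hcm, integral_const_mul, integral_const]
    simp
  rw [variance_eq_sub hX, hexp]
  simp only [Pi.pow_apply]
  nlinarith [sq_nonneg ((∫ ω, X ω ∂μ) - c)]

/-- Taylor-step variance bound: for `h ∈ C_c^∞(ℝ^{m+r})` there is a constant `C > 0`,
depending only on `h`, such that whenever `(U,R)` is independent of `𝓖`, `(U,R)` is
`𝓗`-measurable, `V` is integrable with `E[V|𝓗] = 0` and `E[|V|⁴] < ∞`, one has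
`Var(E[h(U+V,R)|𝓖]) ≤ 2 E[(E[∇₁h(U,R)·V|𝓖])²] + C E[|V|⁴]`. -/
theorem taylor_step_variance_bound (m r : ℕ) (hm : 1 ≤ m) (hr : 1 ≤ r)
    (h : EuclideanSpace ℝ (Fin m) × EuclideanSpace ℝ (Fin r) → ℝ)
    (hsmooth : ContDiff ℝ (⊤ : ℕ∞) h) (hsupp : HasCompactSupport h) :
    ∃ C : ℝ, 0 < C ∧
      ∀ (Ω : Type) (mΩ : MeasurableSpace Ω) (P : Measure Ω), IsProbabilityMeasure P →
      ∀ (G H : MeasurableSpace Ω), G ≤ mΩ → H ≤ mΩ →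
      ∀ (U V : Ω → EuclideanSpace ℝ (Fin m)) (R : Ω → EuclideanSpace ℝ (Fin r)),
        Indep (MeasurableSpace.comap (fun ω => (U ω, R ω)) inferInstance) G P →
        Measurable[H] (fun ω => (U ω, R ω)) →
        Integrable V P →
        MeasureTheory.condExp H P V =ᵐ[P] 0 →
        Integrable (fun ω => ‖V ω‖ ^ 4) P →
        variance (MeasureTheory.condExp G P (fun ω => h (U ω + V ω, R ω))) P ≤
          2 * ∫ ω, (MeasureTheory.condExp G P
              (fun ω' => fderiv ℝ h (U ω', R ω') (V ω', 0)) ω) ^ 2 ∂P +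
            C * ∫ ω, ‖V ω‖ ^ 4 ∂P := by
  obtain ⟨K, hK0, hTaylor⟩ := taylor_aux hsmooth hsupp
  obtain ⟨M0, hM0⟩ := hsmooth.continuous.bounded_above_of_compact_support hsupp
  obtain ⟨M1, hM1⟩ := (hsmooth.continuous_fderiv (by simp)).bounded_above_of_compact_support
    (hsupp.fderiv (𝕜 := ℝ))
  refine ⟨2 * K ^ 2 + 1, by positivity, ?_⟩
  intro Ω mΩ P hP G H hG hH U V R hIndep hWH hVint hVcond hV4int
  have hM1nonneg : 0 ≤ M1 := (norm_nonneg (fderiv ℝ h 0)).trans (hM1 0)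
  -- measurability
  have hW : Measurable[mΩ] (fun ω => (U ω, R ω)) := fun s hs => hH _ (hWH hs)
  have hU : Measurable[mΩ] U := measurable_fst.comp hW
  have hR : Measurable[mΩ] R := measurable_snd.comp hW
  have hVaem : AEMeasurable V P := hVint.aemeasurable
  set f₀ : Ω → ℝ := fun ω => h (U ω, R ω) with hf₀def
  set f₁ : Ω → ℝ := fun ω => h (U ω + V ω, R ω) with hf₁def
  set L : Ω → ℝ := fun ω' => fderiv ℝ h (U ω', R ω') (V ω', 0) with hLdef
  set Rem : Ω → ℝ := fun ω => f₁ ω - f₀ ω - L ω with hRemdef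
  have hf0sm : AEStronglyMeasurable[mΩ] f₀ P :=
    (hsmooth.continuous.measurable.comp_aemeasurable hW.aemeasurable).aestronglyMeasurable
  have hYaem : AEMeasurable (fun ω => (U ω + V ω, R ω)) P :=
    (hU.aemeasurable.add hVaem).prodMk hR.aemeasurable
  have hf1sm : AEStronglyMeasurable[mΩ] f₁ P :=
    (hsmooth.continuous.measurable.comp_aemeasurable hYaem).aestronglyMeasurable
  have hφ : Continuous (fun q : (EuclideanSpace ℝ (Fin m) × EuclideanSpace ℝ (Fin r)) ×
      EuclideanSpace ℝ (Fin m) => (fderiv ℝ h q.1) (q.2, 0)) :=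
    isBoundedBilinearMap_apply.continuous.comp
      (((hsmooth.continuous_fderiv (by simp)).comp continuous_fst).prodMk
        (continuous_snd.prodMk continuous_const))
  have hLaesm : AEStronglyMeasurable[mΩ] L P :=
    (hφ.measurable.comp_aemeasurable (hW.aemeasurable.prodMk hVaem)).aestronglyMeasurable
  -- bounds
  have hpn : ∀ v : EuclideanSpace ℝ (Fin m), ‖(v, (0 : EuclideanSpace ℝ (Fin r)))‖ = ‖v‖ := by
    intro v; simp [Prod.norm_def]
  have hLbound : ∀ ω, |L ω| ≤ M1 * ‖V ω‖ := by
    intro ω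
    calc |L ω| = ‖fderiv ℝ h (U ω, R ω) (V ω, 0)‖ := (Real.norm_eq_abs _).symm
      _ ≤ ‖fderiv ℝ h (U ω, R ω)‖ * ‖((V ω, 0) :
          EuclideanSpace ℝ (Fin m) × EuclideanSpace ℝ (Fin r))‖ :=
        (fderiv ℝ h (U ω, R ω)).le_opNorm _
      _ ≤ M1 * ‖V ω‖ := by
          rw [hpn]
          exact mul_le_mul_of_nonneg_right (hM1 _) (norm_nonneg _)
  have hRemBound : ∀ ω, |Rem ω| ≤ K * ‖V ω‖ ^ 2 := by
    intro ω
    have h1 := hTaylor (U ω, R ω) (V ω, 0)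
    have h2 : ((U ω, R ω) + (V ω, 0) :
        EuclideanSpace ℝ (Fin m) × EuclideanSpace ℝ (Fin r)) = (U ω + V ω, R ω) := by
      simp [Prod.ext_iff]
    rw [h2, hpn] at h1
    exact h1
  -- integrability
  have hV2int : Integrable (fun ω => ‖V ω‖ ^ 2) P := by
    have hgi : Integrable (fun ω => 1 + ‖V ω‖ ^ 4) P := (integrable_const 1).add hV4int
    refine Integrable.mono' hgi
      ((((continuous_pow 2).comp continuous_norm).measurable.comp_aemeasurable hVaem).aestronglyMeasurable) (ae_of_all _ fun ω => ?_)
    rw [Real.norm_eq_abs, abs_of_nonneg (by positivity)]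
    nlinarith [sq_nonneg (‖V ω‖ ^ 2 - 1), sq_nonneg (‖V ω‖)]
  have hMemf1 : MemLp f₁ 2 P := MemLp.of_bound hf1sm M0 (ae_of_all _ fun ω => hM0 _)
  have hf0int : Integrable f₀ P :=
    (MemLp.of_bound hf0sm M0 (ae_of_all _ fun ω => hM0 _)).integrable one_le_two
  have hMemL : MemLp L 2 P := by
    refine (memLp_two_iff_integrable_sq hLaesm).mpr ?_
    refine Integrable.mono' (hV2int.const_mul (M1 ^ 2))
      ((hLaesm.aemeasurable.pow_const 2).aestronglyMeasurable) (ae_of_all _ fun ω => ?_)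
    rw [Real.norm_eq_abs, abs_of_nonneg (sq_nonneg _)]
    calc L ω ^ 2 = |L ω| ^ 2 := (sq_abs _).symm
      _ ≤ (M1 * ‖V ω‖) ^ 2 := pow_le_pow_left₀ (abs_nonneg _) (hLbound ω) 2
      _ = M1 ^ 2 * ‖V ω‖ ^ 2 := by ring
  have hLint : Integrable L P := hMemL.integrable one_le_two
  have hRemAesm : AEStronglyMeasurable[mΩ] Rem P := (hf1sm.sub hf0sm).sub hLaesm
  have hMemRem : MemLp Rem 2 P := by
    refine (memLp_two_iff_integrable_sq hRemAesm).mpr ?_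
    refine Integrable.mono' (hV4int.const_mul (K ^ 2))
      ((hRemAesm.aemeasurable.pow_const 2).aestronglyMeasurable) (ae_of_all _ fun ω => ?_)
    rw [Real.norm_eq_abs, abs_of_nonneg (sq_nonneg _)]
    calc Rem ω ^ 2 = |Rem ω| ^ 2 := (sq_abs _).symm
      _ ≤ (K * ‖V ω‖ ^ 2) ^ 2 := pow_le_pow_left₀ (abs_nonneg _) (hRemBound ω) 2
      _ = K ^ 2 * ‖V ω‖ ^ 4 := by ring
  have hRint : Integrable Rem P := hMemRem.integrable one_le_two
  -- conditional expectation decomposition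
  have hWcomap : MeasurableSpace.comap (fun ω => (U ω, R ω)) inferInstance ≤ mΩ := hW.comap_le
  have hf0smW : StronglyMeasurable[MeasurableSpace.comap (fun ω => (U ω, R ω)) inferInstance] f₀ :=
    ((hsmooth.continuous.measurable).comp (Measurable.of_comap_le le_rfl)).stronglyMeasurable
  set c : ℝ := ∫ ω, f₀ ω ∂P with hcdef
  have hc : MeasureTheory.condExp G P f₀ =ᵐ[P] fun _ => c :=
    condExp_indep_eq hWcomap hG hf0smW hIndep
  have hsplit : f₁ = (fun ω => f₀ ω + L ω) + Rem := by
    funext ω; simp only [Pi.add_apply, hRemdef]; ring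
  set A : Ω → ℝ := MeasureTheory.condExp G P L with hAdef
  set B : Ω → ℝ := MeasureTheory.condExp G P Rem with hBdef
  have e1 : MeasureTheory.condExp G P f₁ =ᵐ[P]
      MeasureTheory.condExp G P (fun ω => f₀ ω + L ω) + B := by
    rw [hsplit]
    exact condExp_add (hf0int.add hLint) hRint G
  have e2 : MeasureTheory.condExp G P (fun ω => f₀ ω + L ω) =ᵐ[P]
      MeasureTheory.condExp G P f₀ + A := condExp_add hf0int hLint G
  set X : Ω → ℝ := MeasureTheory.condExp G P f₁ with hXdef
  have hXcomb : ∀ᵐ ω ∂P, X ω - c = A ω + B ω := by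
    filter_upwards [e1, e2, hc] with ω h1 h2 h3
    simp only [Pi.add_apply] at h1 h2
    rw [h1, h2, h3]
    ring
  -- L² facts
  have hXmem : MemLp X 2 P := (condexp_memLp_two (m0 := mΩ) hG hMemf1).1
  obtain ⟨hAmem, -⟩ := condexp_memLp_two (m0 := mΩ) hG hMemL
  obtain ⟨hBmem, hBle⟩ := condexp_memLp_two (m0 := mΩ) hG hMemRem
  have hA2int : Integrable (fun ω => A ω ^ 2) P :=
    (memLp_two_iff_integrable_sq hAmem.aestronglyMeasurable).mp hAmem
  have hB2int : Integrable (fun ω => B ω ^ 2) P :=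
    (memLp_two_iff_integrable_sq hBmem.aestronglyMeasurable).mp hBmem
  have hRem2int : Integrable (fun ω => Rem ω ^ 2) P :=
    (memLp_two_iff_integrable_sq hRemAesm).mp hMemRem
  -- variance chain
  have step1 : variance X P ≤ ∫ ω, (X ω - c) ^ 2 ∂P := var_le_integral_sq (m0 := mΩ) hXmem c
  have step2 : ∫ ω, (X ω - c) ^ 2 ∂P = ∫ ω, (A ω + B ω) ^ 2 ∂P := by
    refine integral_congr_ae ?_
    filter_upwards [hXcomb] with ω hω
    rw [show X ω - c = A ω + B ω from hω]
  have step3 : ∫ ω, (A ω + B ω) ^ 2 ∂P ≤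
      2 * ∫ ω, A ω ^ 2 ∂P + 2 * ∫ ω, B ω ^ 2 ∂P := by
    have hInt : Integrable (fun ω => 2 * A ω ^ 2 + 2 * B ω ^ 2) P :=
      (hA2int.const_mul 2).add (hB2int.const_mul 2)
    have hle : ∫ ω, (A ω + B ω) ^ 2 ∂P ≤ ∫ ω, (2 * A ω ^ 2 + 2 * B ω ^ 2) ∂P :=
      integral_mono_of_nonneg (ae_of_all _ fun ω => sq_nonneg _) hInt
        (ae_of_all _ fun ω => show (A ω + B ω) ^ 2 ≤ 2 * A ω ^ 2 + 2 * B ω ^ 2 by nlinarith [sq_nonneg (A ω - B ω)])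
    rw [integral_add (hA2int.const_mul 2) (hB2int.const_mul 2),
      integral_const_mul, integral_const_mul] at hle
    exact hle
  have step4 : ∫ ω, Rem ω ^ 2 ∂P ≤ K ^ 2 * ∫ ω, ‖V ω‖ ^ 4 ∂P := by
    have hle : ∫ ω, Rem ω ^ 2 ∂P ≤ ∫ ω, (K ^ 2 * ‖V ω‖ ^ 4) ∂P := by
      refine integral_mono_of_nonneg (ae_of_all _ fun ω => sq_nonneg _)
        (hV4int.const_mul (K ^ 2)) (ae_of_all _ fun ω => ?_)
      calc Rem ω ^ 2 = |Rem ω| ^ 2 := (sq_abs _).symm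
        _ ≤ (K * ‖V ω‖ ^ 2) ^ 2 := pow_le_pow_left₀ (abs_nonneg _) (hRemBound ω) 2
        _ = K ^ 2 * ‖V ω‖ ^ 4 := by ring
    rwa [integral_const_mul] at hle
  have hVnonneg : 0 ≤ ∫ ω, ‖V ω‖ ^ 4 ∂P := integral_nonneg fun ω => by positivity
  calc variance X P ≤ ∫ ω, (A ω + B ω) ^ 2 ∂P := step2 ▸ step1
    _ ≤ 2 * ∫ ω, A ω ^ 2 ∂P + 2 * ∫ ω, B ω ^ 2 ∂P := step3
    _ ≤ 2 * ∫ ω, A ω ^ 2 ∂P + (2 * K ^ 2 + 1) * ∫ ω, ‖V ω‖ ^ 4 ∂P := by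
        have := hBle.trans step4
        nlinarith [this, hVnonneg]
end
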